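/- arXiv:2511.09808 — 2 statements merged into one kernel-verified Lean document; each statement's English description precedes it below -/
import Mathlib

section
/- For all x ∈ (0,1), the binary relative entropy satisfies d(x, 1−x) ≥ log(1/(2.4 x)), where d(x,y) = x·log(x/y) + (1−x)·log((1−x)/(1−y)). -/
private lemma L1' {t : ℝ} (ht : 0 < t) (ht1 : t ≤ 1) : t^2 - 1 ≤ 2*t*Real.log t := by
  rcases eq_or_lt_of_le ht1 with h|h
  · subst h; simp
  · have hlt : Real.log t < 0 := Real.log_neg ht h
    have hs : -Real.log t < Real.sinh (-Real.log t) := Real.self_lt_sinh_iff.2 (by linarith)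
    rw [Real.sinh_eq, neg_neg, Real.exp_neg, Real.exp_log ht] at hs
    have hinv : t * t⁻¹ = 1 := mul_inv_cancel₀ ht.ne'
    nlinarith [mul_lt_mul_of_pos_left hs ht]

private lemma Lser2 {y : ℝ} (h : |y| < 1) :
    |(y + y^2/2) + Real.log (1 - y)| ≤ |y|^3/(1-|y|) := by
  have H := Real.abs_log_sub_add_sum_range_le h 2
  norm_num [Finset.sum_range_succ] at H
  convert H using 3

private lemma Lser3 {y : ℝ} (h : |y| < 1) :
    |(y + y^2/2 + y^3/3) + Real.log (1 - y)| ≤ |y|^4/(1-|y|) := by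
  have H := Real.abs_log_sub_add_sum_range_le h 3
  norm_num [Finset.sum_range_succ] at H
  convert H using 3

private lemma Lpos {u : ℝ} (h0 : 0 ≤ u) (h1 : u ≤ 1/2) :
    u - u^2/2 - 2*u^3 ≤ Real.log (1+u) := by
  have h : |(-u)| < 1 := by rw [abs_neg, abs_of_nonneg h0]; linarith
  have H := Lser2 h
  rw [show (1 - -u) = 1+u by ring, abs_neg, abs_of_nonneg h0] at H
  have h2 := (abs_le.1 H).1
  have hden : u^3/(1-u) ≤ 2*u^3 := by
    rw [div_le_iff₀ (by linarith)]; nlinarith [pow_nonneg h0 3]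
  nlinarith [h2]

private lemma Lneg {w : ℝ} (h0 : 0 ≤ w) (h1 : w ≤ 1/2) :
    -w - w^2/2 - 2*w^3 ≤ Real.log (1-w) := by
  have h : |w| < 1 := by rw [abs_of_nonneg h0]; linarith
  have H := Lser2 h
  rw [abs_of_nonneg h0] at H
  have h2 := (abs_le.1 H).1
  have hden : w^3/(1-w) ≤ 2*w^3 := by
    rw [div_le_iff₀ (by linarith)]; nlinarith [pow_nonneg h0 3]
  nlinarith [h2]

private lemma Lup {u : ℝ} (h0 : 0 ≤ u) (h1 : u ≤ 1/5) :
    Real.log (1+u) ≤ u - u^2/2 + u^3/3 + 2*u^4 := by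
  have h : |(-u)| < 1 := by rw [abs_neg, abs_of_nonneg h0]; linarith
  have H := Lser3 h
  rw [show (1 - -u) = 1+u by ring, abs_neg, abs_of_nonneg h0] at H
  have h2 := (abs_le.1 H).2
  have hden : u^4/(1-u) ≤ 2*u^4 := by
    rw [div_le_iff₀ (by linarith)]; nlinarith [pow_nonneg h0 4]
  nlinarith [h2]

private lemma hlog3 : (1.098611:ℝ) ≤ Real.log 3 := by
  have key : (12:ℝ) * Real.log 3 = 19 * Real.log 2 + Real.log (1 + 7153/524288) := by
    rw [show (1:ℝ) + 7153/524288 = 3^12 / 2^19 by norm_num,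
      Real.log_div (by positivity) (by positivity), Real.log_pow, Real.log_pow]
    push_cast; ring
  have hb := Lpos (u := 7153/524288) (by norm_num) (by norm_num)
  have h2 := Real.log_two_gt_d9
  norm_num at hb key ⊢
  linarith

private lemma hlog5 : Real.log 5 ≤ (1.6096:ℝ) := by
  have key : (10:ℝ) * Real.log 5 = 23 * Real.log 2 + Real.log (1 + 1377017/8388608) := by
    rw [show (1:ℝ) + 1377017/8388608 = 5^10 / 2^23 by norm_num,
      Real.log_div (by positivity) (by positivity), Real.log_pow, Real.log_pow]
    push_cast; ring
  have hb := Lup (u := 1377017/8388608) (by norm_num) (by norm_num)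
  have h2 := Real.log_two_lt_d9
  norm_num at hb key ⊢
  linarith

set_option maxHeartbeats 2000000 in
/-- For all `x ∈ (0,1)`, the binary relative entropy satisfies
`d(x, 1-x) ≥ log(1/(2.4 x))` where `d(x,y) = x log(x/y) + (1-x) log((1-x)/(1-y))`. -/
theorem stmt4 (x : ℝ) (hx0 : 0 < x) (hx1 : x < 1) :
    Real.log (1 / (2.4 * x)) ≤
      x * Real.log (x / (1 - x)) + (1 - x) * Real.log ((1 - x) / x) := by
  have hx1' : (0:ℝ) < 1 - x := by linarith
  have hL : Real.log (1 / (2.4 * x)) =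
      -(2*Real.log 2 + Real.log 3 - Real.log 5) - Real.log x := by
    rw [one_div, Real.log_inv, Real.log_mul (by norm_num) hx0.ne',
      show (2.4:ℝ) = 2^2*3/5 by norm_num,
      Real.log_div (by norm_num) (by norm_num),
      Real.log_mul (by norm_num) (by norm_num), Real.log_pow]
    push_cast; ring
  rw [hL, Real.log_div hx0.ne' hx1'.ne', Real.log_div hx1'.ne' hx0.ne']
  have hl5 := hlog5
  have key : 0 ≤ 2*x*Real.log x + (1-2*x)*Real.log (1-x)
      + (2*Real.log 2 + Real.log 3 - Real.log 5) := by
    rcases le_or_gt x (1/3) with hc | hc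
    · -- Case A : 0 < x ≤ 1/3
      have h1 : (3*x)^2 - 1 ≤ 2*(3*x)*Real.log (3*x) :=
        L1' (by linarith) (by linarith)
      rw [Real.log_mul (by norm_num) hx0.ne'] at h1
      have h2 := Lpos (u := (1-3*x)/2) (by linarith) (by linarith)
      rw [show (1:ℝ) + (1-3*x)/2 = 3/2*(1-x) by ring,
        Real.log_mul (by norm_num) hx1'.ne',
        Real.log_div (by norm_num) (by norm_num)] at h2
      have h2' := mul_le_mul_of_nonneg_left h2 (by linarith : (0:ℝ) ≤ 1-2*x)
      have hl2 : 0 ≤ (3-2*x) * (Real.log 2 - 0.6931471803) :=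
        mul_nonneg (by linarith) (by linarith [Real.log_two_gt_d9])
      have hP : 0 ≤ (9*x^2-1)/3
          + (1-2*x)*((1-3*x)/2 - ((1-3*x)/2)^2/2 - 2*((1-3*x)/2)^3)
          + (3-2*x)*0.6931471803 - 1.6096 := by
        nlinarith [sq_nonneg (x - 0.3231), mul_nonneg hx0.le (sub_nonneg.2 hc),
          mul_nonneg (mul_nonneg hx0.le (sub_nonneg.2 hc)) (sub_nonneg.2 hc),
          mul_nonneg hx0.le (sq_nonneg (x - 0.3231)),
          mul_nonneg (sub_nonneg.2 hc) (sq_nonneg (x - 0.3231))]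
      linarith [h1, h2', hl2, hl5, hP]
    · rcases le_or_gt x (9/20) with hc2 | hc2
      · -- Case B : 1/3 ≤ x ≤ 9/20
        have h1 := Lpos (u := 3*x-1) (by linarith) (by linarith)
        rw [show (1:ℝ) + (3*x-1) = 3*x by ring,
          Real.log_mul (by norm_num) hx0.ne'] at h1
        have h2 := Lneg (w := (3*x-1)/2) (by linarith) (by linarith)
        rw [show (1:ℝ) - (3*x-1)/2 = 3/2*(1-x) by ring,
          Real.log_mul (by norm_num) hx1'.ne',
          Real.log_div (by norm_num) (by norm_num)] at h2
        have h1' := mul_le_mul_of_nonneg_left h1 (by linarith : (0:ℝ) ≤ 2*x)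
        have h2' := mul_le_mul_of_nonneg_left h2 (by linarith : (0:ℝ) ≤ 1-2*x)
        have hl2 : 0 ≤ (3-2*x) * (Real.log 2 - 0.6931471803) :=
          mul_nonneg (by linarith) (by linarith [Real.log_two_gt_d9])
        have hP : 0 ≤ 2*x*((3*x-1) - (3*x-1)^2/2 - 2*(3*x-1)^3)
            + (1-2*x)*(-((3*x-1)/2) - ((3*x-1)/2)^2/2 - 2*((3*x-1)/2)^3)
            + (3-2*x)*0.6931471803 - 1.6096 := by
          nlinarith [sq_nonneg (x - 1/3), mul_nonneg (sub_nonneg.2 hc.le) (sub_nonneg.2 hc2),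
            mul_nonneg (mul_nonneg (sub_nonneg.2 hc.le) (sub_nonneg.2 hc2)) (sub_nonneg.2 hc.le),
            mul_nonneg (mul_nonneg (sub_nonneg.2 hc.le) (sub_nonneg.2 hc.le)) (sub_nonneg.2 hc2),
            mul_nonneg (sub_nonneg.2 hc.le) (sq_nonneg (x - 1/3))]
        linarith [h1', h2', hl2, hl5, hP]
      · rcases le_or_gt x (1/2) with hc3 | hc3
        · -- Case B2 : 9/20 ≤ x ≤ 1/2
          have h1 := Lneg (w := 1-2*x) (by linarith) (by linarith)
          rw [show (1:ℝ) - (1-2*x) = 2*x by ring,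
            Real.log_mul (by norm_num) hx0.ne'] at h1
          have h2 := Lneg (w := (3*x-1)/2) (by linarith) (by linarith)
          rw [show (1:ℝ) - (3*x-1)/2 = 3/2*(1-x) by ring,
            Real.log_mul (by norm_num) hx1'.ne',
            Real.log_div (by norm_num) (by norm_num)] at h2
          have h1' := mul_le_mul_of_nonneg_left h1 (by linarith : (0:ℝ) ≤ 2*x)
          have h2' := mul_le_mul_of_nonneg_left h2 (by linarith : (0:ℝ) ≤ 1-2*x)
          have hl2 : 0 ≤ (3-4*x) * (Real.log 2 - 0.6931471803) :=
            mul_nonneg (by linarith) (by linarith [Real.log_two_gt_d9])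
          have hl3 : 0 ≤ (2*x) * (Real.log 3 - 1.098611) :=
            mul_nonneg (by linarith) (by linarith [hlog3])
          have hP : 0 ≤ 2*x*(-(1-2*x) - (1-2*x)^2/2 - 2*(1-2*x)^3)
              + (1-2*x)*(-((3*x-1)/2) - ((3*x-1)/2)^2/2 - 2*((3*x-1)/2)^3)
              + (3-4*x)*0.6931471803 + 2*x*1.098611 - 1.6096 := by
            nlinarith [mul_nonneg (sub_nonneg.2 hc2.le) (sub_nonneg.2 hc3),
              mul_nonneg (mul_nonneg (sub_nonneg.2 hc2.le) (sub_nonneg.2 hc3)) (sub_nonneg.2 hc3),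
              sq_nonneg (x - 1/2)]
          linarith [h1', h2', hl2, hl3, hl5, hP]
        · -- Case C : 1/2 < x < 1
          have h1 : x^2 - 1 ≤ 2*x*Real.log x := L1' hx0 hx1.le
          have h2 : Real.log (1-x) ≤ (1-x) - 1 := Real.log_le_sub_one_of_pos hx1'
          have h2' := mul_le_mul_of_nonneg_left h2 (by linarith : (0:ℝ) ≤ 2*x-1)
          have hl2 := Real.log_two_gt_d9
          have hl3 := hlog3
          have hP : 0 ≤ (x^2-1) + (2*x-1)*x + 2*0.6931471803 + 1.098611 - 1.6096 := by
            nlinarith [sq_nonneg (x - 1/2)]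
          linarith [h1, h2', hl2, hl3, hl5, hP]
  linarith [key]
end

section
/- Let μ ∈ ℝ, ε > 0, and for each n let μ̂ₙ be the sample mean of n i.i.d. 1-sub-Gaussian random variables with mean μ. Then ∑_{n=1}^∞ E[ e^{n(μ̂ₙ − μ + ε)²/2} · 1{μ̂ₙ < μ − ε} ] ≤ 1/(e^{ε²/2}−1) + (−log(1 − e^{-ε²/2}))/ε². -/
/-!
A Chernoff bound, which only needs the moment generating function of `Xᵢ - μ` at negative
arguments, gives `P(μ̂ₘ < μ - s) ≤ e^{-ms²/2}`. With `F = (μ - ε - μ̂ₘ)⁺` we have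
`e^{mF²/2} = 1 + ∫₀^F m t e^{mt²/2} dt`, so by the layer cake formula the `m`-th term is at most
`e^{-mε²/2} + ∫₀^∞ e^{-m(ε+t)²/2} m t e^{mt²/2} dt = e^{-mε²/2} (1 + 1/(mε²))`.
Summing over `m` gives a geometric series and the series `-log (1 - x) = ∑ xᵐ/m`.

The sub-Gaussian hypothesis is about Bochner integrals, which are `0` for non-integrable functions.
This is harmless: a non-integrable term contributes `0`, and an integrable one dominates
`exp (-a ∑ᵢ (Xᵢ - μ))` for every `a ≥ 0`, so by independence each `exp (-a (Xᵢ - μ))` is integrable.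
-/

open MeasureTheory ProbabilityTheory Real Set

namespace ProbabilityTheory

variable {Ω ι : Type*} [MeasurableSpace Ω] {P : Measure Ω} {Y : ι → Ω → ℝ}

lemma iIndepFun.integrable_exp_mul_of_integrable_exp_mul_sum [DecidableEq ι]
    (h_indep : iIndepFun Y P) (h_meas : ∀ i, Measurable (Y i)) {s : Finset ι} {t : ℝ}
    (h_int : Integrable (fun ω ↦ exp (t * ∑ j ∈ s, Y j ω)) P) {i : ι} (hi : i ∈ s) :
    Integrable (fun ω ↦ exp (t * Y i ω)) P := by
  have h_rest :
      IndepFun (fun ω ↦ exp (t * ∑ j ∈ s.erase i, Y j ω)) (fun ω ↦ exp (t * Y i ω)) P :=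
    (h_indep.indepFun_finsetSum_of_notMem h_meas (s.notMem_erase i)).comp
      (measurable_const_mul t).exp (measurable_const_mul t).exp |>.congr
      (by filter_upwards with ω; simp [Finset.sum_apply]) (by rfl)
  refine h_rest.integrable_right_of_integrable_op (· * ·) 1 one_ne_zero
    (fun x y ↦ by simp [enorm_mul]) ?_ (by fun_prop) (by fun_prop) ?_
  · simp_rw [← Finset.add_sum_erase s _ hi] at h_int
    simpa only [mul_add, exp_add, mul_comm] using h_int
  · intro h
    have := h_indep.isProbabilityMeasure
    obtain ⟨ω, hω⟩ := h.exists
    exact (exp_pos _).ne' hω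

lemma iIndepFun.measureReal_sum_le_neg_le_exp (h_indep : iIndepFun Y P)
    (h_meas : ∀ i, Measurable (Y i)) {s : Finset ι} {a : ℝ} (ha : 0 ≤ a)
    (h_int : ∀ i ∈ s, Integrable (fun ω ↦ exp (-a * Y i ω)) P)
    (h_mgf : ∀ i ∈ s, mgf (Y i) P (-a) ≤ exp (a ^ 2 / 2)) :
    P.real {ω | ∑ i ∈ s, Y i ω ≤ -(s.card * a)} ≤ exp (-(s.card * a ^ 2) / 2) := by
  have := h_indep.isProbabilityMeasure
  have h_sum_int := h_indep.integrable_exp_mul_sum h_meas h_int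
  calc P.real {ω | ∑ i ∈ s, Y i ω ≤ -(s.card * a)}
      ≤ exp (-(-a) * -(s.card * a)) * mgf (∑ i ∈ s, Y i) P (-a) := by
        simpa [Finset.sum_apply] using
          measure_le_le_exp_mul_mgf (-(s.card * a)) (neg_nonpos.2 ha) h_sum_int
    _ ≤ exp (-(-a) * -(s.card * a)) * exp (a ^ 2 / 2) ^ s.card := by
        rw [h_indep.mgf_sum h_meas]
        gcongr
        exact (Finset.prod_le_prod (fun _ _ ↦ mgf_nonneg) h_mgf).trans_eq (Finset.prod_const _)
    _ = exp (-(s.card * a ^ 2) / 2) := by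
        rw [← exp_nat_mul, ← exp_add]; ring_nf

end ProbabilityTheory

lemma integral_mul_exp_mul_sq_div_two (c x : ℝ) :
    ∫ t in (0 : ℝ)..x, c * t * exp (c * t ^ 2 / 2) = exp (c * x ^ 2 / 2) - 1 := by
  have h_deriv (t : ℝ) :
      HasDerivAt (fun u ↦ exp (c * u ^ 2 / 2)) (c * t * exp (c * t ^ 2 / 2)) t := by
    convert (((hasDerivAt_pow 2 t).const_mul c).div_const 2).exp using 1
    push_cast; ring
  rw [intervalIntegral.integral_eq_sub_of_hasDerivAt (fun t _ ↦ h_deriv t)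
    ((by fun_prop : Continuous _).intervalIntegrable _ _)]
  simp

lemma lintegral_Ioi_mul_exp_neg_mul {r : ℝ} (hr : 0 < r) :
    ∫⁻ t in Ioi 0, ENNReal.ofReal (t * exp (-(r * t))) = ENNReal.ofReal (1 / r ^ 2) := by
  have h_gamma := integral_rpow_mul_exp_neg_mul_Ioi two_pos hr
  norm_num [Real.Gamma_two] at h_gamma
  rw [← ofReal_integral_eq_lintegral_ofReal
    (Integrable.of_integral_ne_zero (by rw [h_gamma]; positivity)), h_gamma, one_div]
  filter_upwards [ae_restrict_mem measurableSet_Ioi] with t (ht : 0 < t)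
  positivity

lemma lintegral_ofReal_exp_sq_sub_one {α : Type*} [MeasurableSpace α] (ν : Measure α)
    {F : α → ℝ} (hF : Measurable F) (hF_nn : ∀ x, 0 ≤ F x) {c : ℝ} (hc : 0 ≤ c) :
    ∫⁻ x, ENNReal.ofReal (exp (c * F x ^ 2 / 2) - 1) ∂ν
      = ∫⁻ t in Ioi 0, ν {x | t < F x} * ENNReal.ofReal (c * t * exp (c * t ^ 2 / 2)) := by
  simp_rw [← integral_mul_exp_mul_sq_div_two]
  refine lintegral_comp_eq_lintegral_meas_lt_mul ν (.of_forall hF_nn) hF.aemeasurable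
    (fun t _ ↦ (by fun_prop : Continuous _).intervalIntegrable _ _) ?_
  filter_upwards [ae_restrict_mem measurableSet_Ioi] with t (ht : 0 < t)
  positivity

lemma lintegral_indicator_exp_sq_le_of_tail {α : Type*} [MeasurableSpace α] {ν : Measure α}
    {S : α → ℝ} (hS : Measurable S) {μ ε c : ℝ} (hε : 0 < ε) (hc : 0 < c)
    (h_tail : ∀ s > 0, ν {x | S x < μ - s} ≤ ENNReal.ofReal (exp (-(c * s ^ 2) / 2))) :
    ∫⁻ x, ENNReal.ofReal
        ({x | S x < μ - ε}.indicator (fun x ↦ exp (c * (S x - μ + ε) ^ 2 / 2)) x) ∂ν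
      ≤ ENNReal.ofReal (exp (-(c * ε ^ 2) / 2) * (1 + 1 / (c * ε ^ 2))) := by
  set A := {x | S x < μ - ε}
  set F : α → ℝ := fun x ↦ max (μ - ε - S x) 0
  have hA : MeasurableSet A := measurableSet_lt hS measurable_const
  have h_split (x : α) : ENNReal.ofReal (A.indicator (fun x ↦ exp (c * (S x - μ + ε) ^ 2 / 2)) x)
      ≤ A.indicator 1 x + ENNReal.ofReal (exp (c * F x ^ 2 / 2) - 1) := by
    by_cases hx : x ∈ A
    · have hF : F x ^ 2 = (S x - μ + ε) ^ 2 := by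
        rw [show F x = μ - ε - S x from max_eq_left (by linarith [show S x < μ - ε from hx])]
        ring
      simp only [indicator_of_mem hx, hF, Pi.one_apply]
      simpa using ENNReal.ofReal_add_le (p := 1) (q := exp (c * (S x - μ + ε) ^ 2 / 2) - 1)
    · simp [indicator_of_notMem hx]
  have h_tail_F {t : ℝ} (ht : 0 < t) :
      ν {x | t < F x} * ENNReal.ofReal (c * t * exp (c * t ^ 2 / 2))
        ≤ ENNReal.ofReal (c * exp (-(c * ε ^ 2) / 2))
            * ENNReal.ofReal (t * exp (-(c * ε * t))) := by
    have h_sub : {x | t < F x} ⊆ {x | S x < μ - (ε + t)} := fun x hx ↦ by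
      simp only [F, mem_ofPred_eq, lt_max_iff] at hx ⊢
      rcases hx with hx | hx <;> linarith
    calc ν {x | t < F x} * ENNReal.ofReal (c * t * exp (c * t ^ 2 / 2))
        ≤ ENNReal.ofReal (exp (-(c * (ε + t) ^ 2) / 2))
            * ENNReal.ofReal (c * t * exp (c * t ^ 2 / 2)) := by
          gcongr
          exact (measure_mono h_sub).trans (h_tail _ (by linarith))
      _ = _ := by
          rw [← ENNReal.ofReal_mul (by positivity), ← ENNReal.ofReal_mul (by positivity)]
          congr 1
          have h_exp : exp (-(c * (ε + t) ^ 2) / 2)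
              = exp (-(c * ε ^ 2) / 2) * exp (-(c * ε * t)) * exp (-(c * t ^ 2 / 2)) := by
            rw [← exp_add, ← exp_add]; ring_nf
          rw [h_exp, exp_neg (c * t ^ 2 / 2)]
          field_simp
  calc ∫⁻ x, ENNReal.ofReal (A.indicator (fun x ↦ exp (c * (S x - μ + ε) ^ 2 / 2)) x) ∂ν
      ≤ ∫⁻ x, (A.indicator 1 x + ENNReal.ofReal (exp (c * F x ^ 2 / 2) - 1)) ∂ν :=
        lintegral_mono h_split
    _ = ν A + ∫⁻ t in Ioi 0, ν {x | t < F x} * ENNReal.ofReal (c * t * exp (c * t ^ 2 / 2)) := by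
        rw [lintegral_add_left (measurable_one.indicator hA), lintegral_indicator_one hA,
          lintegral_ofReal_exp_sq_sub_one ν (by fun_prop) (fun _ ↦ le_max_right _ _) hc.le]
    _ ≤ ENNReal.ofReal (exp (-(c * ε ^ 2) / 2))
          + ENNReal.ofReal (c * exp (-(c * ε ^ 2) / 2))
            * ∫⁻ t in Ioi 0, ENNReal.ofReal (t * exp (-(c * ε * t))) := by
        rw [← lintegral_const_mul' _ _ ENNReal.ofReal_ne_top]
        gcongr ?_ + ?_
        · exact h_tail ε hε
        · exact setLIntegral_mono' measurableSet_Ioi fun t ht ↦ h_tail_F ht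
    _ = ENNReal.ofReal (exp (-(c * ε ^ 2) / 2) * (1 + 1 / (c * ε ^ 2))) := by
        rw [lintegral_Ioi_mul_exp_neg_mul (by positivity), ← ENNReal.ofReal_mul (by positivity),
          ← ENNReal.ofReal_add (by positivity) (by positivity)]
        congr 1
        field_simp

section SampleMean

variable {Ω : Type*} [MeasurableSpace Ω] {P : Measure Ω}

noncomputable def sampleMean (X : ℕ → Ω → ℝ) (m : ℕ) (ω : Ω) : ℝ :=
  (∑ i ∈ Finset.range m, X i ω) / m

lemma integrable_exp_neg_mul_of_integrable_indicator_exp_sq [IsFiniteMeasure P] {S : Ω → ℝ}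
    (hS : Measurable S) {μ ε c a : ℝ} (hc : 0 ≤ c) (ha : 0 ≤ a)
    (h_int : Integrable
      (fun ω ↦ {ω | S ω < μ - ε}.indicator (fun ω ↦ exp (c * (S ω - μ + ε) ^ 2 / 2)) ω) P) :
    Integrable (fun ω ↦ exp (-a * (c * (S ω - μ)))) P := by
  set K := exp (c * (a ^ 2 / 2 + a * ε))
  refine ((h_int.add (integrable_const 1)).const_mul K).mono' (by fun_prop) (.of_forall fun ω ↦ ?_)
  rw [norm_of_nonneg (exp_pos _).le]
  by_cases hω : S ω < μ - ε
  · calc exp (-a * (c * (S ω - μ))) ≤ K * exp (c * (S ω - μ + ε) ^ 2 / 2) := by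
          rw [← exp_add, exp_le_exp]
          -- `a u ≤ u²/2 + a²/2` with `u = μ - ε - S ω`
          nlinarith [mul_nonneg hc (sq_nonneg (S ω - μ + ε + a))]
      _ ≤ _ := by
          rw [Pi.add_apply, indicator_of_mem (by exact hω)]
          gcongr; linarith
  · calc exp (-a * (c * (S ω - μ))) ≤ K * 1 := by
          rw [mul_one, exp_le_exp]
          nlinarith [mul_nonneg (mul_nonneg ha hc) (by linarith : 0 ≤ S ω - μ + ε),
            mul_nonneg hc (sq_nonneg a)]
      _ ≤ _ := by
          rw [Pi.add_apply, indicator_of_notMem (by exact hω)]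
          gcongr; linarith [exp_pos 0]

lemma integral_indicator_exp_sampleMean_le {X : ℕ → Ω → ℝ} {μ ε : ℝ} (hε : 0 < ε)
    (h_meas : ∀ i, Measurable (X i)) (h_indep : iIndepFun X P)
    (h_mgf : ∀ i (l : ℝ), mgf (fun ω ↦ X i ω - μ) P l ≤ exp (l ^ 2 / 2)) {m : ℕ} (hm : 0 < m) :
    ∫ ω, {ω | sampleMean X m ω < μ - ε}.indicator
        (fun ω ↦ exp (m * (sampleMean X m ω - μ + ε) ^ 2 / 2)) ω ∂P
      ≤ exp (-ε ^ 2 / 2) ^ m * (1 + 1 / (m * ε ^ 2)) := by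
  have := h_indep.isProbabilityMeasure
  set T := fun ω ↦ {ω | sampleMean X m ω < μ - ε}.indicator
    (fun ω ↦ exp (m * (sampleMean X m ω - μ + ε) ^ 2 / 2)) ω
  have hm' : (0 : ℝ) < m := Nat.cast_pos.2 hm
  by_cases hT : Integrable T P
  swap
  · rw [integral_undef hT]; positivity
  have h_mean_meas : Measurable (sampleMean X m) := by unfold sampleMean; fun_prop
  set Y : ℕ → Ω → ℝ := fun i ω ↦ X i ω - μ
  have hY_meas (i : ℕ) : Measurable (Y i) := (h_meas i).sub_const μ
  have hY_indep : iIndepFun Y P := h_indep.comp (fun _ x ↦ x - μ) fun _ ↦ measurable_sub_const μ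
  have h_sum_eq (ω : Ω) : ∑ i ∈ Finset.range m, Y i ω = m * (sampleMean X m ω - μ) := by
    simp only [Y, sampleMean, Finset.sum_sub_distrib, Finset.sum_const, Finset.card_range]
    field_simp
    ring
  have h_tail (s : ℝ) (hs : 0 < s) :
      P {ω | sampleMean X m ω < μ - s} ≤ ENNReal.ofReal (exp (-(m * s ^ 2) / 2)) := by
    have h_int (i : ℕ) (_ : i ∈ Finset.range m) : Integrable (fun ω ↦ exp (-s * Y i ω)) P := by
      refine hY_indep.integrable_exp_mul_of_integrable_exp_mul_sum hY_meas ?_ ‹_›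
      simpa only [h_sum_eq] using
        integrable_exp_neg_mul_of_integrable_indicator_exp_sq h_mean_meas hm'.le hs.le hT
    have h_sub : {ω | sampleMean X m ω < μ - s}
        ⊆ {ω | ∑ i ∈ Finset.range m, Y i ω ≤ -((Finset.range m).card * s)} := fun ω hω ↦ by
      simp only [mem_ofPred_eq, h_sum_eq, Finset.card_range] at hω ⊢
      nlinarith
    rw [← ofReal_measureReal]
    refine ENNReal.ofReal_le_ofReal ((measureReal_mono h_sub).trans ?_)
    simpa using hY_indep.measureReal_sum_le_neg_le_exp hY_meas hs.le h_int
      (fun i _ ↦ by simpa using h_mgf i (-s))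
  have h_lint := lintegral_indicator_exp_sq_le_of_tail h_mean_meas hε hm' h_tail
  have hT_nn : 0 ≤ T := fun ω ↦ indicator_nonneg (fun _ _ ↦ (exp_pos _).le) ω
  rw [integral_eq_lintegral_of_nonneg_ae (.of_forall hT_nn) hT.aestronglyMeasurable]
  refine ENNReal.toReal_le_of_le_ofReal (by positivity) (h_lint.trans_eq ?_)
  rw [← exp_nat_mul]
  ring_nf

end SampleMean

lemma hasSum_pow_succ_mul_one_add_inv {r : ℝ} (h0 : 0 ≤ r) (h1 : r < 1) (c : ℝ) :
    HasSum (fun n : ℕ ↦ r ^ (n + 1) * (1 + 1 / ((n + 1) * c)))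
      (r / (1 - r) + -log (1 - r) / c) := by
  have h_geom := (hasSum_geometric_of_lt_one h0 h1).mul_left r
  have h_log := (hasSum_pow_div_log_of_abs_lt_one (abs_lt.2 ⟨by linarith, h1⟩)).div_const c
  have h_eq : (fun n : ℕ ↦ r ^ (n + 1) * (1 + 1 / ((n + 1) * c)))
      = fun n : ℕ ↦ r * r ^ n + r ^ (n + 1) / (n + 1) / c := by
    ext n
    rw [one_div, mul_inv]
    ring
  rw [h_eq, div_eq_mul_inv r]
  exact h_geom.add h_log

theorem stmt16_general {Ω : Type*} [MeasureSpace Ω]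
    (X : ℕ → Ω → ℝ) (μ ε : ℝ) (hε : 0 < ε)
    (hmeas : ∀ i, Measurable (X i))
    (hindep : iIndepFun X ℙ)
    (hsub : ∀ i (l : ℝ), ∫ ω, Real.exp (l * (X i ω - μ)) ∂ℙ ≤ Real.exp (l ^ 2 / 2)) :
    (∑' n : ℕ, ∫ ω,
        Set.indicator {ω | (∑ i ∈ Finset.range (n + 1), X i ω) / (n + 1) < μ - ε}
          (fun ω => Real.exp (((n : ℝ) + 1)
            * ((∑ i ∈ Finset.range (n + 1), X i ω) / (n + 1) - μ + ε) ^ 2 / 2)) ω ∂ℙ)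
      ≤ 1 / (Real.exp (ε ^ 2 / 2) - 1) + (-Real.log (1 - Real.exp (-ε ^ 2 / 2))) / ε ^ 2 := by
  set r := exp (-ε ^ 2 / 2)
  have hr1 : r < 1 := exp_lt_one_iff.2 (by nlinarith)
  have h_bound (n : ℕ) := integral_indicator_exp_sampleMean_le hε hmeas hindep hsub n.succ_pos
  simp only [sampleMean, Nat.cast_succ] at h_bound
  have h_sum := hasSum_pow_succ_mul_one_add_inv (exp_pos _).le hr1 (ε ^ 2)
  have h_geom : r / (1 - r) = 1 / (exp (ε ^ 2 / 2) - 1) := by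
    have hr0 : r ≠ 0 := (exp_pos _).ne'
    rw [show exp (ε ^ 2 / 2) = r⁻¹ by rw [← exp_neg]; ring_nf]
    field_simp
  rw [← h_geom]
  refine (Summable.tsum_le_tsum h_bound ?_ h_sum.summable).trans_eq h_sum.tsum_eq
  exact h_sum.summable.of_nonneg_of_le (fun n ↦ integral_nonneg fun ω ↦
    indicator_nonneg (fun _ _ ↦ (exp_pos _).le) ω) h_bound

/-- For i.i.d. `1`-sub-Gaussian variables with mean `μ` and any `ε > 0`,
`∑_{n=1}^∞ E[e^{n(μ̂ₙ - μ + ε)²/2} 1{μ̂ₙ < μ - ε}] ≤ 1/(e^{ε²/2}-1) + (-log(1-e^{-ε²/2}))/ε²`. -/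
theorem stmt16 {Ω : Type*} [MeasureSpace Ω] [IsProbabilityMeasure (ℙ : Measure Ω)]
    (X : ℕ → Ω → ℝ) (μ ε : ℝ) (hε : 0 < ε)
    (hmeas : ∀ i, Measurable (X i))
    (hindep : iIndepFun X ℙ)
    (hident : ∀ i, IdentDistrib (X i) (X 0) ℙ ℙ)
    (hmean : ∀ i, ∫ ω, X i ω ∂ℙ = μ)
    (hsub : ∀ i (l : ℝ), ∫ ω, Real.exp (l * (X i ω - μ)) ∂ℙ ≤ Real.exp (l ^ 2 / 2)) :
    (∑' n : ℕ, ∫ ω,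
        Set.indicator {ω | (∑ i ∈ Finset.range (n + 1), X i ω) / (n + 1) < μ - ε}
          (fun ω => Real.exp (((n : ℝ) + 1)
            * ((∑ i ∈ Finset.range (n + 1), X i ω) / (n + 1) - μ + ε) ^ 2 / 2)) ω ∂ℙ)
      ≤ 1 / (Real.exp (ε ^ 2 / 2) - 1) + (-Real.log (1 - Real.exp (-ε ^ 2 / 2))) / ε ^ 2 :=
  stmt16_general X μ ε hε hmeas hindep hsub
end
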